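/- Let s ≥ 1 and d ≥ 1 be integers and let U_1, …, U_{s-1} be unitary d×d complex matrices. On ℂ^d ⊗ ℂ^s define H = Σ_{x=1}^{s-1} ( U_x ⊗ |x+1⟩⟨x| + U_x⁻¹ ⊗ |x⟩⟨x+1| ). Let P_1 be any d×d matrix and define P_k for k = 2, …, s recursively by P_k = U_{k-1} P_{k-1} U_{k-1}⁻¹, and set P = Σ_{k=1}^{s} P_k ⊗ |k⟩⟨k|. Then P commutes with H: PH = HP. -/

import Mathlib

/-!
`H` is a sum of hops `U_x ⊗ |x+1⟩⟨x| + U_x⁻¹ ⊗ |x⟩⟨x+1|` and `P` is block diagonal, so it is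
enough that `P` commutes with each hop. Multiplying a block-diagonal operator into a hop only
multiplies the hop's weight by the adjacent diagonal blocks, so this reduces to
`P_{x+1} U_x = U_x P_x` and `P_x U_x⁻¹ = U_x⁻¹ P_{x+1}`, both immediate from the recursion.
-/

open Kronecker Matrix

section BlockDiagonal

variable {ι n R : Type*} [Fintype ι] [DecidableEq ι] [Fintype n] [CommRing R]

theorem sum_kronecker_single_diag_mul_kronecker_single (Q : ι → Matrix n n R)
    (A : Matrix n n R) (a b : ι) :
    (∑ k, Q k ⊗ₖ single k k (1 : R)) * (A ⊗ₖ single a b 1) = (Q a * A) ⊗ₖ single a b 1 := by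
  rw [Finset.sum_mul, Finset.sum_eq_single_of_mem a (Finset.mem_univ a)]
  · rw [← mul_kronecker_mul, single_mul_single_same, one_mul]
  · intro k _ hk
    rw [← mul_kronecker_mul, single_mul_single_of_ne (h := hk), kronecker_zero]

theorem kronecker_single_mul_sum_kronecker_single_diag (Q : ι → Matrix n n R)
    (A : Matrix n n R) (a b : ι) :
    (A ⊗ₖ single a b 1) * (∑ k, Q k ⊗ₖ single k k (1 : R)) = (A * Q b) ⊗ₖ single a b 1 := by
  rw [Finset.mul_sum, Finset.sum_eq_single_of_mem b (Finset.mem_univ b)]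
  · rw [← mul_kronecker_mul, single_mul_single_same, one_mul]
  · intro k _ hk
    rw [← mul_kronecker_mul, single_mul_single_of_ne (h := hk.symm), kronecker_zero]

theorem sum_kronecker_single_diag_commute_hop [DecidableEq n] (Q : ι → Matrix n n R)
    (U : Matrix n n R) (hU : IsUnit U.det) (a b : ι) (hQ : Q a = U * Q b * U⁻¹) :
    (∑ k, Q k ⊗ₖ single k k (1 : R)) * (U ⊗ₖ single a b 1 + U⁻¹ ⊗ₖ single b a 1) =
      (U ⊗ₖ single a b 1 + U⁻¹ ⊗ₖ single b a 1) * ∑ k, Q k ⊗ₖ single k k (1 : R) := by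
  have hQU : Q a * U = U * Q b := by rw [hQ, nonsing_inv_mul_cancel_right U _ hU]
  have hQU' : Q b * U⁻¹ = U⁻¹ * Q a := by
    rw [hQ, mul_assoc U, nonsing_inv_mul_cancel_left U _ hU]
  rw [mul_add, add_mul, sum_kronecker_single_diag_mul_kronecker_single,
    sum_kronecker_single_diag_mul_kronecker_single, kronecker_single_mul_sum_kronecker_single_diag,
    kronecker_single_mul_sum_kronecker_single_diag, hQU, hQU']

end BlockDiagonal

theorem peres_constant_of_motion (s d : ℕ)
    (U : ℕ → Matrix (Fin d) (Fin d) ℂ)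
    (hU : ∀ x, 1 ≤ x → x ≤ s - 1 → U x ∈ Matrix.unitaryGroup (Fin d) ℂ)
    (P : ℕ → Matrix (Fin d) (Fin d) ℂ)
    (hP : ∀ k, 2 ≤ k → k ≤ s → P k = U (k - 1) * P (k - 1) * (U (k - 1))⁻¹) :
    letI H : Matrix (Fin d × Fin s) (Fin d × Fin s) ℂ :=
      ∑ x : Fin (s - 1),
        ((U (x.val + 1)) ⊗ₖ
            Matrix.single (⟨x.val + 1, by have := x.isLt; omega⟩ : Fin s)
              (⟨x.val, by have := x.isLt; omega⟩ : Fin s) (1 : ℂ) +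
          (U (x.val + 1))⁻¹ ⊗ₖ
            Matrix.single (⟨x.val, by have := x.isLt; omega⟩ : Fin s)
              (⟨x.val + 1, by have := x.isLt; omega⟩ : Fin s) (1 : ℂ))
    letI Pop : Matrix (Fin d × Fin s) (Fin d × Fin s) ℂ :=
      ∑ k : Fin s, (P (k.val + 1)) ⊗ₖ Matrix.single k k (1 : ℂ)
    Pop * H = H * Pop := by
  rw [Finset.mul_sum, Finset.sum_mul]
  refine Finset.sum_congr rfl fun x _ => ?_
  have hx := x.isLt
  have hUnit : IsUnit (U (x.val + 1)).det :=
    isUnit_det_of_right_inverse (mem_unitaryGroup_iff.mp (hU (x.val + 1) (by omega) (by omega)))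
  exact sum_kronecker_single_diag_commute_hop (fun k : Fin s => P (k.val + 1)) _ hUnit _ _
    (hP (x.val + 2) (by omega) (by omega))
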